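/- arXiv:1506.01669 — 3 statements merged into one kernel-verified Lean document; each statement's English description precedes it below -/
import Mathlib

section
/- Let φ : (0,∞) → (0,∞) be C¹ with l ≤ φ(t)t²/Φ(t) ≤ m for all t > 0, where 1 < l ≤ m and Φ(t) = ∫₀^{|t|}φ(s)s ds, and let Φ̃ be the complementary function of Φ. Then Φ̃(φ(t)t) ≤ (m−1)·Φ(t) ≤ m·Φ(t) for every t ≥ 0. -/
open Real MeasureTheory

theorem stmt_5 (φ Φ Ψ : ℝ → ℝ) (l m : ℝ)
    (hφC1 : ContDiffOn ℝ 1 φ (Set.Ioi 0))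
    (hφpos : ∀ t > (0:ℝ), 0 < φ t)
    (hmono : StrictMonoOn (fun t => φ t * t) (Set.Ioi 0))
    (hΦ : ∀ t : ℝ, Φ t = ∫ s in (0:ℝ)..|t|, φ s * s)
    (hΨ : ∀ s : ℝ, Ψ s = sSup ((fun t => s * t - Φ t) '' Set.Ici 0))
    (hl : 1 < l) (hlm : l ≤ m)
    (hbound : ∀ t > (0:ℝ), l ≤ φ t * t ^ 2 / Φ t ∧ φ t * t ^ 2 / Φ t ≤ m) :
    ∀ t : ℝ, 0 ≤ t → Ψ (φ t * t) ≤ (m - 1) * Φ t ∧ (m - 1) * Φ t ≤ m * Φ t := by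
  have hΦr : ∀ x : ℝ, 0 ≤ x → Φ x = ∫ s in (0:ℝ)..x, φ s * s := by
    intro x hx; rw [hΦ, abs_of_nonneg hx]
  have hΦ0 : Φ 0 = 0 := by simp [hΦr 0 le_rfl]
  -- Integrability on Ioc 0 T for T > 0
  have hIoc : ∀ T : ℝ, 0 < T → IntegrableOn (fun s => φ s * s) (Set.Ioc 0 T) := by
    intro T hT
    by_contra h
    have hz : Φ T = 0 := by
      rw [hΦr T hT.le, intervalIntegral.integral_of_le hT.le,
        MeasureTheory.integral_undef h]
    have h1 := (hbound T hT).1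
    rw [hz, div_zero] at h1
    linarith
  have hII : ∀ a b : ℝ, 0 ≤ a → a ≤ b →
      IntervalIntegrable (fun s => φ s * s) volume a b := by
    intro a b ha hab
    rcases eq_or_lt_of_le hab with rfl | hab'
    · exact IntervalIntegrable.refl
    · have hb : 0 < b := lt_of_le_of_lt ha hab'
      rw [intervalIntegrable_iff, Set.uIoc_of_le hab]
      exact (hIoc b hb).mono_set (Set.Ioc_subset_Ioc ha le_rfl)
  have hΦnonneg : ∀ x : ℝ, 0 ≤ x → 0 ≤ Φ x := by
    intro x hx
    rw [hΦr x hx]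
    apply intervalIntegral.integral_nonneg hx
    intro u hu
    rcases eq_or_lt_of_le hu.1 with rfl | hu'
    · simp
    · exact le_of_lt (mul_pos (hφpos u hu') hu')
  have hkey : ∀ s : ℝ, 0 < s → φ s * s * s ≤ m * Φ s := by
    intro s hs
    have hΦpos : 0 < Φ s := by
      rcases lt_or_eq_of_le (hΦnonneg s hs.le) with h | h
      · exact h
      · exfalso; have h1 := (hbound s hs).1; rw [← h, div_zero] at h1; linarith
    have h2 := (hbound s hs).2
    rw [div_le_iff₀ hΦpos] at h2
    calc φ s * s * s = φ s * s ^ 2 := by ring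
      _ ≤ m * Φ s := h2
  -- main claim: the supremum defining Ψ (φ t * t) is attained at t
  have claim : ∀ t : ℝ, 0 ≤ t → ∀ u : ℝ, 0 ≤ u →
      φ t * t * u - Φ u ≤ φ t * t * t - Φ t := by
    intro t ht u hu
    rcases le_or_gt u t with hut | htu
    · have hadj : (∫ s in (0:ℝ)..u, φ s * s) + ∫ s in u..t, φ s * s
          = ∫ s in (0:ℝ)..t, φ s * s :=
        intervalIntegral.integral_add_adjacent_intervals (hII 0 u le_rfl hu)
          (hII u t hu hut)
      have hle : (∫ s in u..t, φ s * s) ≤ (t - u) * (φ t * t) := by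
        have h1 : (∫ s in u..t, φ s * s) ≤ ∫ _ in u..t, φ t * t := by
          rw [intervalIntegral.integral_of_le hut, intervalIntegral.integral_of_le hut]
          apply setIntegral_mono_on (hII u t hu hut).1
            (intervalIntegrable_const (c := φ t * t)).1 measurableSet_Ioc
          intro x hx
          have hx0 : 0 < x := lt_of_le_of_lt hu hx.1
          have ht0 : 0 < t := lt_of_lt_of_le hx0 hx.2
          exact hmono.monotoneOn (Set.mem_Ioi.mpr hx0) (Set.mem_Ioi.mpr ht0) hx.2
        have h2 : (∫ _ in u..t, φ t * t) = (t - u) * (φ t * t) := by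
          rw [intervalIntegral.integral_const, smul_eq_mul]
        linarith
      rw [hΦr u hu, hΦr t ht]
      linarith
    · have hadj : (∫ s in (0:ℝ)..t, φ s * s) + ∫ s in t..u, φ s * s
          = ∫ s in (0:ℝ)..u, φ s * s :=
        intervalIntegral.integral_add_adjacent_intervals (hII 0 t le_rfl ht)
          (hII t u ht htu.le)
      have hge : (u - t) * (φ t * t) ≤ ∫ s in t..u, φ s * s := by
        have h1 : (∫ _ in t..u, φ t * t) ≤ ∫ s in t..u, φ s * s := by
          rw [intervalIntegral.integral_of_le htu.le,
            intervalIntegral.integral_of_le htu.le]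
          apply setIntegral_mono_on (intervalIntegrable_const (c := φ t * t)).1
            (hII t u ht htu.le).1 measurableSet_Ioc
          intro x hx
          rcases eq_or_lt_of_le ht with rfl | ht0
          · have hx0 : 0 < x := hx.1
            simpa using le_of_lt (mul_pos (hφpos x hx0) hx0)
          · exact hmono.monotoneOn (Set.mem_Ioi.mpr ht0)
              (Set.mem_Ioi.mpr (lt_trans ht0 hx.1)) hx.1.le
        have h2 : (∫ _ in t..u, φ t * t) = (u - t) * (φ t * t) := by
          rw [intervalIntegral.integral_const, smul_eq_mul]
        linarith
      rw [hΦr u hu, hΦr t ht]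
      linarith
  intro t ht
  have hΦt := hΦnonneg t ht
  have hm1 : 0 ≤ (m - 1) * Φ t := mul_nonneg (by linarith) hΦt
  constructor
  · rw [hΨ]
    apply Real.sSup_le _ hm1
    rintro x ⟨u, hu, rfl⟩
    have h1 := claim t ht u hu
    have h2 : φ t * t * t ≤ m * Φ t := by
      rcases eq_or_lt_of_le ht with rfl | ht'
      · simp [hΦ0]
      · exact hkey t ht'
    simp only
    linarith
  · have : (m - 1) * Φ t = m * Φ t - Φ t := by ring
    linarith
end

section
/- Let φ : (0,∞) → (0,∞) be C¹ with φ(t)t²/Φ(t) ≤ m for all t > 0 (Φ(t) = ∫₀^{|t|}φ(s)s ds), and suppose t ↦ φ(t)/t^{m−2} is nonincreasing on (0,∞). Then the function P(s) = Φ(s) − (1/m)φ(s)s² is nondecreasing on [0,∞) and P(s) ≥ 0 for all s ≥ 0. -/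
open Real MeasureTheory

/-!
Write `ψ t = φ t / t ^ (m - 2)`, so that `φ t * t = ψ t * t ^ (m - 1)` and `φ t * t ^ 2 = ψ t * t ^ m`.
For `0 < a ≤ b`, bounding the antitone `ψ` below by `ψ b` on `[a, b]` gives
`Φ b - Φ a = ∫ ψ t t^(m-1) ≥ ψ b (b^m - a^m) / m ≥ (ψ b b^m - ψ a a^m) / m`, which is `P a ≤ P b`.
Nonnegativity of `P` is the hypothesis `φ t * t ^ 2 ≤ m * Φ t`.
-/

theorem integral_mul_rpow_ge_of_antitoneOn {ψ : ℝ → ℝ} {a b m : ℝ} (ha : 0 < a) (hab : a ≤ b)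
    (hm : 0 < m) (hψ : AntitoneOn ψ (Set.Icc a b)) :
    (ψ b * b ^ m - ψ a * a ^ m) / m ≤ ∫ t in a..b, ψ t * t ^ (m - 1) := by
  have hb : b ∈ Set.Icc a b := Set.right_mem_Icc.2 hab
  have hψa : ψ b * a ^ m ≤ ψ a * a ^ m :=
    mul_le_mul_of_nonneg_right (hψ (Set.left_mem_Icc.2 hab) hb hab) (rpow_nonneg ha.le _)
  have hint : IntervalIntegrable (fun t => ψ t * t ^ (m - 1)) volume a b := by
    refine (AntitoneOn.intervalIntegrable ?_).mul_continuousOn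
      (continuousOn_id.rpow_const fun t ht => Or.inl ?_)
    · rwa [Set.uIcc_of_le hab]
    · rw [Set.uIcc_of_le hab] at ht
      exact (ha.trans_le ht.1).ne'
  calc (ψ b * b ^ m - ψ a * a ^ m) / m ≤ ψ b * ((b ^ m - a ^ m) / m) := by
        rw [mul_div_assoc', mul_sub]
        gcongr
    _ = ∫ t in a..b, ψ b * t ^ (m - 1) := by
        rw [intervalIntegral.integral_const_mul, integral_rpow (Or.inl (by linarith)), sub_add_cancel]
    _ ≤ ∫ t in a..b, ψ t * t ^ (m - 1) :=
        intervalIntegral.integral_mono_on hab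
          ((intervalIntegral.intervalIntegrable_rpow' (by linarith)).const_mul _) hint
          fun t ht => mul_le_mul_of_nonneg_right (hψ ht hb ht.2) (rpow_nonneg (ha.le.trans ht.1) _)

theorem div_rpow_sub_two_mul_rpow_sub_one (x : ℝ) {t : ℝ} (ht : 0 < t) (m : ℝ) :
    x / t ^ (m - 2) * t ^ (m - 1) = x * t := by
  rw [div_mul_eq_mul_div, mul_div_assoc, ← rpow_sub ht, show m - 1 - (m - 2) = 1 by ring, rpow_one]

theorem div_rpow_sub_two_mul_rpow (x : ℝ) {t : ℝ} (ht : 0 < t) (m : ℝ) :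
    x / t ^ (m - 2) * t ^ m = x * t ^ 2 := by
  rw [div_mul_eq_mul_div, mul_div_assoc, ← rpow_sub ht, sub_sub_cancel, rpow_two]

-- A non-integrable `f` would have the junk integral `0`.
theorem intervalIntegrable_of_pos_le_mul_integral {f : ℝ → ℝ} {a b c m : ℝ} (hc : 0 < c)
    (h : c ≤ m * ∫ x in a..b, f x) : IntervalIntegrable f volume a b :=
  intervalIntegral.intervalIntegrable_of_integral_ne_zero fun h0 => by
    rw [h0, mul_zero] at h
    exact h.not_gt hc

theorem stmt_8_general (φ Φ : ℝ → ℝ) (m : ℝ)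
    (hφpos : ∀ t > (0:ℝ), 0 < φ t)
    (hΦ : ∀ t : ℝ, Φ t = ∫ s in (0:ℝ)..|t|, φ s * s)
    (hm : 1 < m)
    (hbound : ∀ t > (0:ℝ), φ t * t ^ 2 ≤ m * Φ t)
    (hdec : AntitoneOn (fun t => φ t / t ^ (m - 2)) (Set.Ioi 0)) :
    MonotoneOn (fun s => Φ s - (1 / m) * φ s * s ^ 2) (Set.Ici 0) ∧
    ∀ s : ℝ, 0 ≤ s → 0 ≤ Φ s - (1 / m) * φ s * s ^ 2 := by
  have hm0 : 0 < m := by linarith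
  have hP : ∀ s, Φ s - (1 / m) * φ s * s ^ 2 = Φ s - φ s * s ^ 2 / m := fun s => by ring
  simp only [hP]
  have hnonneg : ∀ s : ℝ, 0 ≤ s → 0 ≤ Φ s - φ s * s ^ 2 / m := by
    intro s hs
    rcases hs.eq_or_lt with rfl | hs
    · simp [hΦ]
    · exact sub_nonneg.2 ((div_le_iff₀' hm0).2 (hbound s hs))
  have hint : ∀ b > 0, IntervalIntegrable (fun s => φ s * s) volume 0 b := fun b hb =>
    intervalIntegrable_of_pos_le_mul_integral (mul_pos (hφpos b hb) (pow_pos hb 2))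
      (by simpa only [hΦ, abs_of_pos hb] using hbound b hb)
  refine ⟨fun a ha b hb hab => ?_, hnonneg⟩
  rcases (Set.mem_Ici.1 ha).eq_or_lt with rfl | ha
  · simpa [hΦ] using hnonneg b hb
  have hb : 0 < b := ha.trans_le hab
  have hdiff : Φ b - Φ a = ∫ t in a..b, φ t / t ^ (m - 2) * t ^ (m - 1) := by
    rw [hΦ, hΦ, abs_of_pos ha, abs_of_pos hb,
      intervalIntegral.integral_interval_sub_left (hint b hb) (hint a ha)]
    refine intervalIntegral.integral_congr fun t ht => ?_
    rw [Set.uIcc_of_le hab] at ht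
    exact (div_rpow_sub_two_mul_rpow_sub_one _ (ha.trans_le ht.1) m).symm
  have key := integral_mul_rpow_ge_of_antitoneOn ha hab hm0
    (hdec.mono fun t ht => ha.trans_le ht.1)
  rw [← hdiff, div_rpow_sub_two_mul_rpow _ ha, div_rpow_sub_two_mul_rpow _ hb, sub_div] at key
  dsimp only
  linarith

theorem stmt_8 (φ Φ : ℝ → ℝ) (m : ℝ)
    (hφC1 : ContDiffOn ℝ 1 φ (Set.Ioi 0))
    (hφpos : ∀ t > (0:ℝ), 0 < φ t)
    (hΦ : ∀ t : ℝ, Φ t = ∫ s in (0:ℝ)..|t|, φ s * s)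
    (hm : 1 < m)
    (hbound : ∀ t > (0:ℝ), φ t * t ^ 2 ≤ m * Φ t)
    (hdec : AntitoneOn (fun t => φ t / t ^ (m - 2)) (Set.Ioi 0)) :
    MonotoneOn (fun s => Φ s - (1 / m) * φ s * s ^ 2) (Set.Ici 0) ∧
    ∀ s : ℝ, 0 ≤ s → 0 ≤ Φ s - (1 / m) * φ s * s ^ 2 :=
  stmt_8_general φ Φ m hφpos hΦ hm hbound hdec
end

section
/- Let φ : (0,∞) → (0,∞) be continuous with l ≤ φ(t)t²/Φ(t) ≤ m for all t > 0 (1 < l ≤ m < N), where Φ(t) = ∫₀^{|t|}φ(s)s ds. Define ξ₀(t) = min{t^l, t^m} and ξ₁(t) = max{t^l, t^m}. Then for all ρ ≥ 0 and t ≥ 0: ξ₀(ρ)Φ(t) ≤ Φ(ρt) ≤ ξ₁(ρ)Φ(t). -/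
open Real MeasureTheory Set

/-!
Since `Φ' (t) = φ(t) t`, the hypothesis `l ≤ φ(t)t²/Φ(t) ≤ m` says `l Φ ≤ t Φ' ≤ m Φ` on `(0, ∞)`,
so `Φ(t) t^(-l)` is nondecreasing and `Φ(t) t^(-m)` is nonincreasing. Comparing these quotients
at `t` and `ρ t` gives the two bounds, with `ρ^l` and `ρ^m` exchanging roles at `ρ = 1`.
-/

lemma hasDerivAt_integral_abs {f : ℝ → ℝ} {x : ℝ} (hf : ContinuousOn f (Ioi 0))
    (hint : IntervalIntegrable f volume 0 x) (hx : 0 < x) :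
    HasDerivAt (fun u => ∫ s in (0:ℝ)..|u|, f s) (f x) x := by
  have hF : HasDerivAt (fun u => ∫ s in (0:ℝ)..u, f s) (f x) x :=
    intervalIntegral.integral_hasDerivAt_right hint
      (hf.stronglyMeasurableAtFilter isOpen_Ioi x hx) (hf.continuousAt (Ioi_mem_nhds hx))
  refine hF.congr_of_eventuallyEq ?_
  filter_upwards [Ioi_mem_nhds hx] with u hu
  rw [abs_of_pos hu]

lemma monotoneOn_mul_rpow_neg {f f' : ℝ → ℝ} {e : ℝ}
    (hf : ∀ x ∈ Ioi (0:ℝ), HasDerivAt f (f' x) x)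
    (hle : ∀ x ∈ Ioi (0:ℝ), e * f x ≤ x * f' x) :
    MonotoneOn (fun x => f x * x ^ (-e)) (Ioi 0) := by
  have hg : ∀ x ∈ Ioi (0:ℝ), HasDerivAt (fun x => f x * x ^ (-e))
      (f' x * x ^ (-e) + f x * (-e * x ^ (-e - 1))) x := fun x hx =>
    (hf x hx).mul (hasDerivAt_rpow_const (Or.inl (ne_of_gt hx)))
  refine monotoneOn_of_deriv_nonneg (convex_Ioi 0)
    (fun x hx => (hg x hx).continuousAt.continuousWithinAt)
    (fun x hx => (hg x (interior_subset hx)).differentiableAt.differentiableWithinAt)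
    (fun x hx => ?_)
  rw [interior_Ioi] at hx
  have hx0 : (0:ℝ) < x := hx
  have hpow : x ^ (-e) = x ^ (-e - 1) * x := by
    rw [← rpow_add_one hx0.ne']; ring_nf
  have hderiv : f' x * x ^ (-e) + f x * (-e * x ^ (-e - 1))
      = x ^ (-e - 1) * (x * f' x - e * f x) := by
    rw [hpow]; ring
  rw [(hg x hx).deriv, hderiv]
  exact mul_nonneg (rpow_pos_of_pos hx0 _).le (sub_nonneg.mpr (hle x hx))

section Scaling

variable {f : ℝ → ℝ} {e ρ t : ℝ}

lemma eq_rpow_mul_mul_rpow_neg {x : ℝ} (hx : 0 < x) : f x = x ^ e * (f x * x ^ (-e)) := by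
  rw [rpow_neg hx.le]
  field_simp [(rpow_pos_of_pos hx e).ne']

lemma rpow_mul_le_of_monotoneOn (hf : MonotoneOn (fun x => f x * x ^ (-e)) (Ioi 0))
    (ht : 0 < t) (hρ : 1 ≤ ρ) : ρ ^ e * f t ≤ f (ρ * t) := by
  have hρt : 0 < ρ * t := mul_pos (by linarith) ht
  have hmono : f t * t ^ (-e) ≤ f (ρ * t) * (ρ * t) ^ (-e) :=
    hf ht hρt (le_mul_of_one_le_left ht.le hρ)
  rw [eq_rpow_mul_mul_rpow_neg (f := f) (e := e) ht, eq_rpow_mul_mul_rpow_neg (f := f) (e := e) hρt,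
    mul_rpow (by linarith) ht.le, mul_assoc]
  gcongr

lemma le_rpow_mul_of_monotoneOn (hf : MonotoneOn (fun x => f x * x ^ (-e)) (Ioi 0))
    (ht : 0 < t) (hρ₀ : 0 < ρ) (hρ : ρ ≤ 1) : f (ρ * t) ≤ ρ ^ e * f t := by
  have hρt : 0 < ρ * t := mul_pos hρ₀ ht
  have hmono : f (ρ * t) * (ρ * t) ^ (-e) ≤ f t * t ^ (-e) :=
    hf hρt ht (mul_le_of_le_one_left ht.le hρ)
  rw [eq_rpow_mul_mul_rpow_neg (f := f) (e := e) ht, eq_rpow_mul_mul_rpow_neg (f := f) (e := e) hρt,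
    mul_rpow hρ₀.le ht.le, mul_assoc]
  gcongr

end Scaling

lemma min_rpow_mul_le_and_le_max_rpow_mul {f f' : ℝ → ℝ} {l m ρ t : ℝ}
    (hf : ∀ x ∈ Ioi (0:ℝ), HasDerivAt f (f' x) x)
    (hlo : ∀ x ∈ Ioi (0:ℝ), l * f x ≤ x * f' x) (hhi : ∀ x ∈ Ioi (0:ℝ), x * f' x ≤ m * f x)
    (hlm : l ≤ m) (hρ : 0 < ρ) (ht : 0 < t) :
    min (ρ ^ l) (ρ ^ m) * f t ≤ f (ρ * t) ∧ f (ρ * t) ≤ max (ρ ^ l) (ρ ^ m) * f t := by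
  have hmono := monotoneOn_mul_rpow_neg hf hlo
  -- `x f' ≤ m f` is the lower hypothesis for `-f`.
  have hanti := monotoneOn_mul_rpow_neg (f := fun x => -f x) (f' := fun x => -f' x) (e := m)
    (fun x hx => (hf x hx).neg) (fun x hx => by linarith [hhi x hx])
  rcases le_total 1 ρ with hρ1 | hρ1
  · have hpow : ρ ^ l ≤ ρ ^ m := rpow_le_rpow_of_exponent_le hρ1 hlm
    rw [min_eq_left hpow, max_eq_right hpow]
    exact ⟨rpow_mul_le_of_monotoneOn hmono ht hρ1,
      by linarith [rpow_mul_le_of_monotoneOn hanti ht hρ1]⟩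
  · have hpow : ρ ^ m ≤ ρ ^ l := rpow_le_rpow_of_exponent_ge hρ hρ1 hlm
    rw [min_eq_right hpow, max_eq_left hpow]
    exact ⟨by linarith [le_rpow_mul_of_monotoneOn hanti ht hρ hρ1],
      le_rpow_mul_of_monotoneOn hmono ht hρ hρ1⟩

theorem stmt_14_general (φ Φ : ℝ → ℝ) (l m : ℝ)
    (hφcont : ContinuousOn φ (Set.Ioi 0))
    (hφpos : ∀ t > (0:ℝ), 0 < φ t)
    (hΦ : ∀ t : ℝ, Φ t = ∫ s in (0:ℝ)..|t|, φ s * s)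
    (hl : 1 < l) (hlm : l ≤ m)
    (hbound : ∀ t > (0:ℝ), l ≤ φ t * t ^ 2 / Φ t ∧ φ t * t ^ 2 / Φ t ≤ m) :
    ∀ ρ : ℝ, 0 ≤ ρ → ∀ t : ℝ, 0 ≤ t →
      min (ρ ^ l) (ρ ^ m) * Φ t ≤ Φ (ρ * t) ∧
      Φ (ρ * t) ≤ max (ρ ^ l) (ρ ^ m) * Φ t := by
  have hΦ0 : Φ 0 = 0 := by rw [hΦ 0, abs_zero, intervalIntegral.integral_same]
  have hΦpos : ∀ x > (0:ℝ), 0 < Φ x := fun x hx => by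
    by_contra! hneg
    have hnum : 0 ≤ φ x * x ^ 2 := mul_nonneg (hφpos x hx).le (sq_nonneg x)
    have : φ x * x ^ 2 / Φ x ≤ 0 := div_nonpos_of_nonneg_of_nonpos hnum hneg
    linarith [(hbound x hx).1]
  -- A non-integrable integrand would make `Φ x` the junk value `0`.
  have hint : ∀ x > (0:ℝ), IntervalIntegrable (fun s => φ s * s) volume 0 x := fun x hx => by
    by_contra hni
    have := hΦpos x hx
    rw [hΦ x, abs_of_pos hx, intervalIntegral.integral_undef hni] at this
    exact lt_irrefl 0 this
  have hderiv : ∀ x ∈ Ioi (0:ℝ), HasDerivAt Φ (φ x * x) x := fun x hx => by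
    rw [show Φ = fun u => ∫ s in (0:ℝ)..|u|, φ s * s from funext hΦ]
    exact hasDerivAt_integral_abs (hφcont.mul continuousOn_id) (hint x hx) hx
  have hlo : ∀ x ∈ Ioi (0:ℝ), l * Φ x ≤ x * (φ x * x) := fun x hx => by
    have := (le_div_iff₀ (hΦpos x hx)).mp (hbound x hx).1
    linarith
  have hhi : ∀ x ∈ Ioi (0:ℝ), x * (φ x * x) ≤ m * Φ x := fun x hx => by
    have := (div_le_iff₀ (hΦpos x hx)).mp (hbound x hx).2
    linarith
  intro ρ hρ t ht
  rcases ht.eq_or_lt with rfl | ht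
  · simp [hΦ0]
  rcases hρ.eq_or_lt with rfl | hρ
  · simp [hΦ0, zero_rpow (by linarith : l ≠ 0), zero_rpow (by linarith : m ≠ 0)]
  exact min_rpow_mul_le_and_le_max_rpow_mul hderiv hlo hhi hlm hρ ht

theorem stmt_14 (φ Φ : ℝ → ℝ) (l m N : ℝ)
    (hφcont : ContinuousOn φ (Set.Ioi 0))
    (hφpos : ∀ t > (0:ℝ), 0 < φ t)
    (hΦ : ∀ t : ℝ, Φ t = ∫ s in (0:ℝ)..|t|, φ s * s)
    (hl : 1 < l) (hlm : l ≤ m) (hmN : m < N)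
    (hbound : ∀ t > (0:ℝ), l ≤ φ t * t ^ 2 / Φ t ∧ φ t * t ^ 2 / Φ t ≤ m) :
    ∀ ρ : ℝ, 0 ≤ ρ → ∀ t : ℝ, 0 ≤ t →
      min (ρ ^ l) (ρ ^ m) * Φ t ≤ Φ (ρ * t) ∧
      Φ (ρ * t) ≤ max (ρ ^ l) (ρ ^ m) * Φ t :=
  stmt_14_general φ Φ l m hφcont hφpos hΦ hl hlm hbound
end
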